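/- arXiv:1609.07444 — 3 statements merged into one kernel-verified Lean document; each statement's English description precedes it below -/
import Mathlib

section
/- Let f₁(x) = −|x₁−x₂|^{−A} for x₂ > x₁ and f₁(x) = |x₁−x₂|^{−A} for x₂ < x₁. Let f₂(x) = |x₁−x₂|^{−A} for x₂−x₁ > 0 or x₂−x₁ < −ε, and f₂(x) = φ(x₂−x₁) for −ε ≤ x₂−x₁ < 0, where φ is the quadratic polynomial with φ(−ε) = ε^{−A}, φ'(−ε) = −Aε^{−A−1}, φ''(−ε) = A(A+1)ε^{−A−2}. Then there is a constant c > 0 depending only on A such that ∫_{|x₁−x₂|<ε} |f₁(x) − f₂(x)| dx ≥ c·ε^{1−A} for all sufficiently small ε > 0. -/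
/-!
Where `0 < x₂ - x₁ < ε` the two functions are `-|x₁ - x₂|^{-A}` and `+|x₁ - x₂|^{-A}`, so
`|f₁ - f₂| ≥ 2 ε^{-A}` there, and for `ε < 1/2` this part of the strip contains the band
`{0 ≤ x₁ ≤ 1/2, x₁ < x₂ < x₁ + ε}` of area `ε / 2`; this gives the bound with `c = 1`.
For the set integral to be meaningful, `|f₁ - f₂|` must be integrable on the strip: `φ` is
continuous, and `|x₁ - x₂|^{-A}` is integrable on the square for `A < 1` because after the shear
`(x, y) ↦ (x - y, y)` it depends on the first coordinate only.
-/

open MeasureTheory Set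

lemma intervalIntegrable_abs_rpow {r : ℝ} (hr : -1 < r) (a b : ℝ) :
    IntervalIntegrable (fun t : ℝ => |t| ^ r) volume a b := by
  have h₀ : ∀ c, 0 ≤ c → IntervalIntegrable (fun t : ℝ => |t| ^ r) volume 0 c := fun c hc =>
    (intervalIntegral.intervalIntegrable_rpow' hr).congr <| by
      rw [uIoc_of_le hc]
      exact fun t ht => by simp only [abs_of_pos ht.1]
  have h : ∀ c, IntervalIntegrable (fun t : ℝ => |t| ^ r) volume 0 c := fun c => by
    rcases le_total 0 c with hc | hc
    · exact h₀ c hc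
    · rw [IntervalIntegrable.iff_comp_neg, neg_zero]
      simpa only [abs_neg] using h₀ (-c) (neg_nonneg.2 hc)
  exact (h a).symm.trans (h b)

lemma integrableOn_abs_rpow_Icc {r : ℝ} (hr : -1 < r) (a b : ℝ) :
    IntegrableOn (fun t : ℝ => |t| ^ r) (Icc a b) :=
  ((intervalIntegrable_iff' (μ := volume)).1 (intervalIntegrable_abs_rpow hr a b)).mono_set
    Icc_subset_uIcc

lemma integrableOn_abs_sub_rpow {r : ℝ} (hr : -1 < r) (a b c d : ℝ) :
    IntegrableOn (fun z : ℝ × ℝ => |z.1 - z.2| ^ r) (Icc a b ×ˢ Icc c d) := by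
  set R := Icc (a - d) (b - c) ×ˢ Icc c d
  have hR : IntegrableOn (fun p : ℝ × ℝ => |p.1| ^ r) R := by
    rw [IntegrableOn, Measure.volume_eq_prod, ← Measure.prod_restrict]
    simpa using (integrableOn_abs_rpow_Icc hr (a - d) (b - c)).mul_prod
      (integrableOn_const (C := (1 : ℝ)) (measure_Icc_lt_top (a := c) (b := d)).ne)
  have hshear := (measurePreserving_sub_prod (volume : Measure ℝ) volume).restrict_preimage
    (measurableSet_Icc.prod measurableSet_Icc : MeasurableSet R)
  rw [← Measure.volume_eq_prod] at hshear
  refine IntegrableOn.mono_set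
    ((hshear.integrable_comp (Measurable.aestronglyMeasurable (by fun_prop))).2 hR) ?_
  rintro ⟨x, y⟩ ⟨hx, hy⟩
  exact ⟨⟨by linarith [hx.1, hy.2], by linarith [hx.2, hy.1]⟩, hy⟩

lemma integrableOn_ite_abs_sub_rpow {r : ℝ} (hr : -1 < r) {p : ℝ × ℝ → Prop} [DecidablePred p]
    (hp : MeasurableSet {x | p x}) {u : ℝ × ℝ → ℝ} {a b c d : ℝ}
    (hu : IntegrableOn u (Icc a b ×ˢ Icc c d)) :
    IntegrableOn (fun x => if p x then u x else |x.1 - x.2| ^ r) (Icc a b ×ˢ Icc c d) :=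
  Integrable.piecewise (s := {x | p x}) hp hu.integrableOn
    (integrableOn_abs_sub_rpow hr a b c d).integrableOn

lemma volume_regionBetween_add_const {α : Type*} [MeasurableSpace α] {μ : Measure α} [SFinite μ]
    {f : α → ℝ} {s : Set α} (hf : AEMeasurable f (μ.restrict s)) (hs : MeasurableSet s) (δ : ℝ) :
    μ.prod volume (regionBetween f (fun x => f x + δ) s) = ENNReal.ofReal δ * μ s := by
  rw [volume_regionBetween_eq_lintegral hf (hf.add_const δ) hs]
  simp

lemma rpow_neg_le_abs_sub_rpow_neg {A ε x y : ℝ} (hA : 0 ≤ A) (hxy : x < y) (hyx : y ≤ x + ε) :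
    ε ^ (-A) ≤ |x - y| ^ (-A) := by
  have hd : |x - y| = y - x := by rw [abs_sub_comm, abs_of_pos (by linarith)]
  exact Real.rpow_le_rpow_of_nonpos (by rw [hd]; linarith) (by rw [hd]; linarith) (by linarith)

/-- Lower bound on the L¹ distance over the diagonal strip between the two
functions `f₁` and `f₂` of Section 4, each satisfying the regularity
conditions; here `φ` is the quadratic matching `|t|^{−A}` to second order
at `t = −ε`. -/
theorem extension_gap_lower_bound (A : ℝ) (hA : 0 < A) (hA1 : A < 1) :
    ∃ c > 0, ∃ ε₀ > 0, ∀ ε : ℝ, 0 < ε → ε < ε₀ →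
      let f₁ : ℝ × ℝ → ℝ := fun x =>
        if x.1 < x.2 then -(|x.1 - x.2| ^ (-A)) else |x.1 - x.2| ^ (-A)
      let φ : ℝ → ℝ := fun t =>
        ε ^ (-A) + (-A * ε ^ (-A - 1)) * (t + ε)
          + (A * (A + 1) * ε ^ (-A - 2) / 2) * (t + ε) ^ 2
      let f₂ : ℝ × ℝ → ℝ := fun x =>
        if -ε ≤ x.2 - x.1 ∧ x.2 - x.1 < 0 then φ (x.2 - x.1)
        else |x.1 - x.2| ^ (-A)
      c * ε ^ (1 - A) ≤
        ∫ x in {x : ℝ × ℝ | x ∈ Icc (0:ℝ) 1 ×ˢ Icc (0:ℝ) 1 ∧ |x.1 - x.2| < ε},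
          |f₁ x - f₂ x| := by
  refine ⟨1, one_pos, 1 / 2, by norm_num, fun ε hε hε₀ => ?_⟩
  intro f₁ φ f₂
  set S := {x : ℝ × ℝ | x ∈ Icc (0:ℝ) 1 ×ˢ Icc (0:ℝ) 1 ∧ |x.1 - x.2| < ε}
  set V := regionBetween (fun t : ℝ => t) (fun t => t + ε) (Icc 0 (1 / 2))
  have hVS : V ⊆ S := by
    rintro ⟨x, y⟩ ⟨hx, hy⟩
    refine ⟨⟨⟨hx.1, by linarith [hx.2]⟩, by linarith [hx.1, hy.1], by linarith [hx.2, hy.2]⟩, ?_⟩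
    rw [abs_sub_lt_iff]
    constructor <;> linarith [hy.1, hy.2]
  have hV : volume V = ENNReal.ofReal (ε / 2) := by
    rw [Measure.volume_eq_prod, volume_regionBetween_add_const (f := fun t : ℝ => t)
      aemeasurable_id' measurableSet_Icc, Real.volume_Icc, ← ENNReal.ofReal_mul hε.le]
    norm_num [div_eq_mul_inv]
  have hgap : ∀ x ∈ V, 2 * ε ^ (-A) ≤ |f₁ x - f₂ x| := by
    rintro ⟨x, y⟩ ⟨-, hxy, hyx⟩
    simp only at hxy hyx
    have hf₂ : ¬(-ε ≤ y - x ∧ y - x < 0) := fun h => by linarith [h.2]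
    simp only [f₁, f₂, if_pos hxy, if_neg hf₂]
    rw [← neg_add', abs_neg, abs_of_nonneg (by positivity)]
    linarith [rpow_neg_le_abs_sub_rpow_neg hA.le hxy hyx.le]
  have hint : IntegrableOn (fun x => |f₁ x - f₂ x|) S := by
    have hr : -1 < -A := by linarith
    have hg := integrableOn_abs_sub_rpow hr 0 1 0 1
    have hφ : IntegrableOn (fun x : ℝ × ℝ => φ (x.2 - x.1)) (Icc 0 1 ×ˢ Icc 0 1) :=
      ContinuousOn.integrableOn_compact (isCompact_Icc.prod isCompact_Icc) (by fun_prop)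
    have hf₁ := integrableOn_ite_abs_sub_rpow (p := fun x => x.1 < x.2) hr
      (by measurability) hg.neg
    have hf₂ := integrableOn_ite_abs_sub_rpow (p := fun x => -ε ≤ x.2 - x.1 ∧ x.2 - x.1 < 0) hr
      (by measurability) hφ
    exact IntegrableOn.mono_set (hf₁.sub hf₂).abs fun x hx => hx.1
  calc 1 * ε ^ (1 - A) = 2 * ε ^ (-A) * (volume V).toReal := by
        rw [hV, ENNReal.toReal_ofReal (by positivity), one_mul, sub_eq_neg_add,
          Real.rpow_add_one hε.ne']
        ring
    _ ≤ ∫ x in V, |f₁ x - f₂ x| :=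
        setIntegral_ge_of_const_le_real (measurableSet_regionBetween (by fun_prop) (by fun_prop)
          measurableSet_Icc) (by simp [hV]) hgap (hint.mono_set hVS)
    _ ≤ ∫ x in S, |f₁ x - f₂ x| :=
        setIntegral_mono_set hint (ae_of_all _ fun _ => abs_nonneg _) hVS.eventuallyLE
end

section
/- Let h : [0,1]² → ℝ be bounded with bounded first partial derivatives, let 0 < A < 1, and set g(u₁,u₂) = u₁^{−A}u₂^{−A/2} h((1−u₁)√u₂, √u₂). Then there exists B' < ∞ such that |g(u)| ≤ B' u₁^{−A}u₂^{−A/2} and |∂g/∂u₁ (u)| ≤ B' u₁^{−A−1}u₂^{−A/2} for all u ∈ (0,1)². -/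
open MeasureTheory Set

/-! Along the lower edge the only singular factors of `g` are the explicit powers: `h ∘ τ` is
bounded because `τ` maps the unit square into itself, and differentiating in `u₁` either hits
`u₁^{-A}`, costing a factor `A / u₁`, or hits `h ∘ τ`, producing `-√u₂ * (∂₁h ∘ τ)`, which is bounded
and, as `u₁ ≤ 1`, also dominated by `u₁^{-A-1}`. -/

/-- Partial derivative with respect to the first coordinate. -/
noncomputable def pd1 (g : ℝ × ℝ → ℝ) (x : ℝ × ℝ) : ℝ :=
  deriv (fun t => g (t, x.2)) x.1

/-- Partial derivative with respect to the second coordinate. -/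
noncomputable def pd2 (g : ℝ × ℝ → ℝ) (x : ℝ × ℝ) : ℝ :=
  deriv (fun t => g (x.1, t)) x.2

noncomputable def tau (u : ℝ × ℝ) : ℝ × ℝ := ((1 - u.1) * Real.sqrt u.2, Real.sqrt u.2)

theorem tau_mapsTo_unitSquare :
    MapsTo tau (Icc (0:ℝ) 1 ×ˢ Icc (0:ℝ) 1) (Icc (0:ℝ) 1 ×ˢ Icc (0:ℝ) 1) := by
  rintro ⟨u₁, u₂⟩ ⟨⟨hu₁0, hu₁1⟩, -, hu₂1⟩
  have hc : Real.sqrt u₂ ∈ Icc (0:ℝ) 1 := ⟨Real.sqrt_nonneg _, Real.sqrt_le_one.mpr hu₂1⟩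
  refine ⟨⟨mul_nonneg (by linarith) hc.1, ?_⟩, hc⟩
  simp only [tau]
  nlinarith [hc.1, hc.2]

theorem hasDerivAt_comp_tau_fst {h : ℝ × ℝ → ℝ} (hh : Differentiable ℝ h) (u : ℝ × ℝ) :
    HasDerivAt (fun t => h (tau (t, u.2))) (-Real.sqrt u.2 * pd1 h (tau u)) u.1 := by
  set c := Real.sqrt u.2
  have hslice : HasDerivAt (fun s => h (s, c)) (pd1 h (tau u)) ((1 - u.1) * c) :=
    (hh.comp (differentiable_id.prodMk (differentiable_const c))).differentiableAt.hasDerivAt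
  have hlin : HasDerivAt (fun t : ℝ => (1 - t) * c) (-c) u.1 := by
    simpa using ((hasDerivAt_id u.1).const_sub 1).mul_const c
  refine (hslice.comp u.1 hlin).congr_deriv ?_
  ring

theorem abs_deriv_rpow_neg_mul_le {H : ℝ → ℝ} {H' a t K M : ℝ} (ht₀ : 0 < t) (ht₁ : t ≤ 1)
    (hH : HasDerivAt H H' t) (hHM : |H t| ≤ M) (hH'M : |H'| ≤ M) :
    |deriv (fun s => s ^ (-a) * K * H s) t| ≤ (|a| + 1) * M * t ^ (-a - 1) * |K| := by
  have hderiv : HasDerivAt (fun s => s ^ (-a) * K * H s)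
      (-a * t ^ (-a - 1) * K * H t + t ^ (-a) * K * H') t := by
    refine (((Real.hasDerivAt_rpow_const (Or.inl ht₀.ne')).mul_const K).mul hH).congr_deriv ?_
    ring
  have hpow : t ^ (-a) ≤ t ^ (-a - 1) := Real.rpow_le_rpow_of_exponent_ge ht₀ ht₁ (by linarith)
  have hpos : 0 < t ^ (-a - 1) := Real.rpow_pos_of_pos ht₀ _
  rw [hderiv.deriv]
  calc _ ≤ |a| * t ^ (-a - 1) * |K| * M + t ^ (-a) * |K| * M := by
        refine (abs_add_le _ _).trans (add_le_add ?_ ?_)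
        · simp only [abs_mul, abs_neg, abs_of_pos hpos]
          gcongr
        · simp only [abs_mul, abs_of_pos (Real.rpow_pos_of_pos ht₀ (-a))]
          gcongr
    _ ≤ |a| * t ^ (-a - 1) * |K| * M + t ^ (-a - 1) * |K| * M := by
        have : 0 ≤ M := (abs_nonneg _).trans hHM
        gcongr
    _ = (|a| + 1) * M * t ^ (-a - 1) * |K| := by ring

theorem transformed_bounds_g_and_du1_general
    (A : ℝ)
    (h : ℝ × ℝ → ℝ) (hsmooth : ContDiff ℝ 1 h)
    (M : ℝ) (hbdd : ∀ x : ℝ × ℝ, x ∈ Icc (0:ℝ) 1 ×ˢ Icc (0:ℝ) 1 →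
      |h x| ≤ M ∧ |pd1 h x| ≤ M ∧ |pd2 h x| ≤ M) :
    ∃ B' : ℝ, ∀ u : ℝ × ℝ, u ∈ Ioo (0:ℝ) 1 ×ˢ Ioo (0:ℝ) 1 →
      (letI g : ℝ × ℝ → ℝ := fun v =>
        v.1 ^ (-A) * v.2 ^ (-A/2) * h ((1 - v.1) * Real.sqrt v.2, Real.sqrt v.2)
      |g u| ≤ B' * u.1 ^ (-A) * u.2 ^ (-A/2) ∧
      |pd1 g u| ≤ B' * u.1 ^ (-A - 1) * u.2 ^ (-A/2)) := by
  refine ⟨(|A| + 1) * M, ?_⟩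
  rintro ⟨u₁, u₂⟩ ⟨hu₁, hu₂⟩
  obtain ⟨hhM, hpd1M, -⟩ :=
    hbdd _ (tau_mapsTo_unitSquare ⟨Ioo_subset_Icc_self hu₁, Ioo_subset_Icc_self hu₂⟩)
  have hK : 0 < u₂ ^ (-A / 2) := Real.rpow_pos_of_pos hu₂.1 _
  have hM : 0 ≤ M := (abs_nonneg _).trans hhM
  constructor
  · have hweight : 0 < u₁ ^ (-A) * u₂ ^ (-A / 2) := mul_pos (Real.rpow_pos_of_pos hu₁.1 _) hK
    calc |u₁ ^ (-A) * u₂ ^ (-A / 2) * h (tau (u₁, u₂))|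
        ≤ u₁ ^ (-A) * u₂ ^ (-A / 2) * M := by
          rw [abs_mul, abs_of_pos hweight]
          gcongr
      _ ≤ u₁ ^ (-A) * u₂ ^ (-A / 2) * ((|A| + 1) * M) := by
          gcongr
          exact le_mul_of_one_le_left hM (by linarith [abs_nonneg A])
      _ = (|A| + 1) * M * u₁ ^ (-A) * u₂ ^ (-A / 2) := by ring
  · have hH'M : |-Real.sqrt u₂ * pd1 h (tau (u₁, u₂))| ≤ M := by
      rw [abs_mul, abs_neg, abs_of_nonneg (Real.sqrt_nonneg _)]
      exact (mul_le_mul_of_nonneg_left hpd1M (Real.sqrt_nonneg _)).trans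
        (mul_le_of_le_one_left hM (Real.sqrt_le_one.mpr hu₂.2.le))
    have := abs_deriv_rpow_neg_mul_le (a := A) (K := u₂ ^ (-A / 2)) hu₁.1 hu₁.2.le
      (hasDerivAt_comp_tau_fst (hsmooth.differentiable one_ne_zero) (u₁, u₂)) hhM hH'M
    rwa [abs_of_pos hK] at this

/-- For `g(u) = u₁^{−A}u₂^{−A/2} h((1−u₁)√u₂, √u₂)` with `h` bounded with
bounded first partials, `g` and `∂g/∂u₁` satisfy the lower-edge singularity
bounds with exponents `A` and `A/2`. -/
theorem transformed_bounds_g_and_du1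
    (A : ℝ) (hA : 0 < A) (hA1 : A < 1)
    (h : ℝ × ℝ → ℝ) (hsmooth : ContDiff ℝ 1 h)
    (M : ℝ) (hbdd : ∀ x : ℝ × ℝ, x ∈ Icc (0:ℝ) 1 ×ˢ Icc (0:ℝ) 1 →
      |h x| ≤ M ∧ |pd1 h x| ≤ M ∧ |pd2 h x| ≤ M) :
    ∃ B' : ℝ, ∀ u : ℝ × ℝ, u ∈ Ioo (0:ℝ) 1 ×ˢ Ioo (0:ℝ) 1 →
      (letI g : ℝ × ℝ → ℝ := fun v =>
        v.1 ^ (-A) * v.2 ^ (-A/2) * h ((1 - v.1) * Real.sqrt v.2, Real.sqrt v.2)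
      |g u| ≤ B' * u.1 ^ (-A) * u.2 ^ (-A/2) ∧
      |pd1 g u| ≤ B' * u.1 ^ (-A - 1) * u.2 ^ (-A/2)) :=
  transformed_bounds_g_and_du1_general A h hsmooth M hbdd
end

section
/- Let h : [0,1]² → ℝ be bounded with bounded first and second partial derivatives, let 0 < A < 1, and set g(u₁,u₂) = u₁^{−A}u₂^{−A/2} h((1−u₁)√u₂, √u₂). Then there exists B' < ∞ such that |∂²g/∂u₁∂u₂ (u)| ≤ B' u₁^{−A−1}u₂^{−A/2−1} for all u ∈ (0,1)². -/
open MeasureTheory Set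

/-!
Write `g(u) = a(u₁) b(u₂) φ(u)` with `a = (·)^(-A)`, `b = (·)^(-A/2)` and
`φ(u) = h((1-u₁)√u₂, √u₂)`. The product rule expresses `∂₁∂₂g` through `φ, ∂₁φ, ∂₂φ, ∂₁∂₂φ`
with coefficients built from `a, a', b, b'`, and on `(0,1)` both `|a|` and `|a'|` are `O(u₁^(-A-1))`
(likewise for `b`). By the chain rule `φ` and `∂₁φ` are bounded by `M`, while `∂₂φ` and `∂₁∂₂φ`
pick up the factor `1/(2√u₂) ≤ 1/u₂` from differentiating `√u₂`, which is exactly what one more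
power of `u₂⁻¹` absorbs.
-/

section PartialDerivatives

variable {f : ℝ × ℝ → ℝ}

lemma pd1_eq_fderiv {x : ℝ × ℝ} (hf : DifferentiableAt ℝ f x) :
    pd1 f x = fderiv ℝ f x (1, 0) :=
  (hf.hasFDerivAt.comp_hasDerivAt x.1
    ((hasDerivAt_id x.1).prodMk (hasDerivAt_const x.1 x.2))).deriv

lemma pd2_eq_fderiv {x : ℝ × ℝ} (hf : DifferentiableAt ℝ f x) :
    pd2 f x = fderiv ℝ f x (0, 1) :=
  (hf.hasFDerivAt.comp_hasDerivAt x.2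
    ((hasDerivAt_const x.2 x.1).prodMk (hasDerivAt_id x.2))).deriv

lemma DifferentiableAt.hasDerivAt_comp_curve {γ : ℝ → ℝ × ℝ} {d₁ d₂ t : ℝ}
    (hf : DifferentiableAt ℝ f (γ t)) (hγ : HasDerivAt γ (d₁, d₂) t) :
    HasDerivAt (fun r => f (γ r)) (d₁ * pd1 f (γ t) + d₂ * pd2 f (γ t)) t := by
  have hd : ((d₁, d₂) : ℝ × ℝ) = d₁ • ((1 : ℝ), (0 : ℝ)) + d₂ • ((0 : ℝ), (1 : ℝ)) := by simp
  refine (hf.hasFDerivAt.comp_hasDerivAt t hγ).congr_deriv ?_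
  rw [hd, map_add, map_smul, map_smul, pd1_eq_fderiv hf, pd2_eq_fderiv hf, smul_eq_mul,
    smul_eq_mul]

lemma contDiff_pd1 {n : WithTop ℕ∞} (hf : ContDiff ℝ (n + 1) f) : ContDiff ℝ n (pd1 f) := by
  have hpd : pd1 f = fun x => fderiv ℝ f x (1, 0) :=
    funext fun x => pd1_eq_fderiv (hf.differentiable (by simp) x)
  rw [hpd]
  exact (hf.fderiv_right le_rfl).clm_apply contDiff_const

lemma contDiff_pd2 {n : WithTop ℕ∞} (hf : ContDiff ℝ (n + 1) f) : ContDiff ℝ n (pd2 f) := by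
  have hpd : pd2 f = fun x => fderiv ℝ f x (0, 1) :=
    funext fun x => pd2_eq_fderiv (hf.differentiable (by simp) x)
  rw [hpd]
  exact (hf.fderiv_right le_rfl).clm_apply contDiff_const

end PartialDerivatives

section SeparableWeight

variable {φ : ℝ × ℝ → ℝ} {x : ℝ × ℝ}

lemma pd1_pd2_mul_mul {a b : ℝ → ℝ}
    (ha : DifferentiableAt ℝ a x.1) (hb : DifferentiableAt ℝ b x.2)
    (hφ₂ : ∀ t, DifferentiableAt ℝ (fun s => φ (t, s)) x.2)
    (hφ₁ : DifferentiableAt ℝ (fun t => φ (t, x.2)) x.1)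
    (hφ₁₂ : DifferentiableAt ℝ (fun t => pd2 φ (t, x.2)) x.1) :
    pd1 (pd2 fun v => a v.1 * b v.2 * φ v) x =
      deriv a x.1 * (deriv b x.2 * φ x + b x.2 * pd2 φ x) +
        a x.1 * (deriv b x.2 * pd1 φ x + b x.2 * pd1 (pd2 φ) x) := by
  obtain ⟨t₀, s₀⟩ := x
  have hpd2 : (fun t => pd2 (fun v => a v.1 * b v.2 * φ v) (t, s₀)) =
      fun t => a t * (deriv b s₀ * φ (t, s₀) + b s₀ * pd2 φ (t, s₀)) := by
    funext t
    exact ((hb.hasDerivAt.const_mul (a t)).mul (hφ₂ t).hasDerivAt).deriv.trans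
      (by simp only [pd2]; ring)
  show deriv (fun t => pd2 _ (t, s₀)) t₀ = _
  rw [hpd2]
  exact (ha.hasDerivAt.mul ((hφ₁.hasDerivAt.const_mul _).add
    (hφ₁₂.hasDerivAt.const_mul _))).deriv

lemma abs_deriv_rpow_neg_mul_add_le {β K s ψ ψ' : ℝ} (hβ : 0 ≤ β) (hs : 0 < s)
    (hψ : |ψ| ≤ K) (hψ' : |ψ'| ≤ K / s) :
    |deriv (fun r => r ^ (-β)) s * ψ + s ^ (-β) * ψ'| ≤ (β + 1) * K * s ^ (-β - 1) := by
  rw [Real.deriv_rpow_const, Real.rpow_sub_one hs.ne']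
  have hS : 0 < s ^ (-β) := Real.rpow_pos_of_pos hs _
  calc |-β * (s ^ (-β) / s) * ψ + s ^ (-β) * ψ'|
      ≤ β * (s ^ (-β) / s) * K + s ^ (-β) * (K / s) := by
        refine (abs_add_le _ _).trans (add_le_add ?_ ?_)
        · rw [abs_mul, abs_mul, abs_neg, abs_of_nonneg hβ, abs_of_pos (by positivity)]
          gcongr
        · rw [abs_mul, abs_of_pos hS]
          gcongr
    _ = (β + 1) * K * (s ^ (-β) / s) := by ring

lemma abs_pd1_pd2_rpow_mul_le {α β K : ℝ} (hα : 0 ≤ α) (hβ : 0 ≤ β)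
    (hx₁ : x.1 ∈ Ioc 0 1) (hx₂ : 0 < x.2)
    (hφ₂ : ∀ t, DifferentiableAt ℝ (fun s => φ (t, s)) x.2)
    (hφ₁ : DifferentiableAt ℝ (fun t => φ (t, x.2)) x.1)
    (hφ₁₂ : DifferentiableAt ℝ (fun t => pd2 φ (t, x.2)) x.1)
    (h₀ : |φ x| ≤ K) (h₁ : |pd1 φ x| ≤ K)
    (h₂ : |pd2 φ x| ≤ K / x.2) (h₁₂ : |pd1 (pd2 φ) x| ≤ K / x.2) :
    |pd1 (pd2 fun v => v.1 ^ (-α) * v.2 ^ (-β) * φ v) x| ≤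
      (α + 1) * (β + 1) * K * x.1 ^ (-α - 1) * x.2 ^ (-β - 1) := by
  have hL : 0 ≤ (β + 1) * K * x.2 ^ (-β - 1) := by
    have := (abs_nonneg _).trans h₀
    positivity
  have hP := abs_deriv_rpow_neg_mul_add_le hβ hx₂ h₀ h₂
  have hQ := (abs_deriv_rpow_neg_mul_add_le hβ hx₂ h₁ h₁₂).trans
    (le_div_self hL hx₁.1 hx₁.2)
  rw [pd1_pd2_mul_mul (Real.differentiableAt_rpow_const_of_ne _ hx₁.1.ne')
    (Real.differentiableAt_rpow_const_of_ne _ hx₂.ne') hφ₂ hφ₁ hφ₁₂]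
  calc _ ≤ (α + 1) * ((β + 1) * K * x.2 ^ (-β - 1)) * x.1 ^ (-α - 1) :=
        abs_deriv_rpow_neg_mul_add_le hα hx₁.1 hP hQ
    _ = _ := by ring

end SeparableWeight

noncomputable def sqrtCoords (v : ℝ × ℝ) : ℝ × ℝ := ((1 - v.1) * √v.2, √v.2)

lemma sqrtCoords_mem_Icc {v : ℝ × ℝ} (hv : v ∈ Icc (0 : ℝ) 1 ×ˢ Icc (0 : ℝ) 1) :
    sqrtCoords v ∈ Icc (0 : ℝ) 1 ×ˢ Icc (0 : ℝ) 1 := by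
  obtain ⟨⟨ht₀, ht₁⟩, -, hs₁⟩ := hv
  have hsqrt : √v.2 ≤ 1 := Real.sqrt_le_one.mpr hs₁
  exact ⟨⟨mul_nonneg (by linarith) (Real.sqrt_nonneg _),
    mul_le_one₀ (by linarith) (Real.sqrt_nonneg _) hsqrt⟩, Real.sqrt_nonneg _, hsqrt⟩

lemma abs_div_two_sqrt_le {a K s : ℝ} (hs : s ∈ Ioc 0 1) (ha : |a| ≤ 2 * K) :
    |a / (2 * √s)| ≤ K / s := by
  have hsqrt : 0 < √s := Real.sqrt_pos.mpr hs.1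
  have hK : 0 ≤ K := by linarith [abs_nonneg a]
  calc |a / (2 * √s)| ≤ 2 * K / (2 * √s) := by
        rw [abs_div, abs_of_pos (by positivity : (0 : ℝ) < 2 * √s)]
        exact div_le_div_of_nonneg_right ha (by positivity)
    _ = K / √s := by field_simp
    _ ≤ K / s := div_le_div_of_nonneg_left hK hs.1 (Real.le_sqrt_self_iff.mpr hs.2)

section SqrtCoords

variable {h : ℝ × ℝ → ℝ} {t s : ℝ} {x : ℝ × ℝ}

lemma hasDerivAt_comp_sqrtCoords_fst (hh : DifferentiableAt ℝ h (sqrtCoords (t, s))) :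
    HasDerivAt (fun r => h (sqrtCoords (r, s))) (-√s * pd1 h (sqrtCoords (t, s))) t := by
  have hγ : HasDerivAt (fun r => sqrtCoords (r, s)) (-√s, 0) t := by
    exact ((((hasDerivAt_id' t).const_sub 1).mul_const √s).prodMk
      (hasDerivAt_const t √s)).congr_deriv (by simp)
  simpa using hh.hasDerivAt_comp_curve (γ := fun r => sqrtCoords (r, s)) hγ

lemma hasDerivAt_comp_sqrtCoords_snd (hs : 0 < s)
    (hh : DifferentiableAt ℝ h (sqrtCoords (t, s))) :
    HasDerivAt (fun r => h (sqrtCoords (t, r)))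
      (((1 - t) * pd1 h (sqrtCoords (t, s)) + pd2 h (sqrtCoords (t, s))) / (2 * √s)) s := by
  have hsqrt := Real.hasDerivAt_sqrt hs.ne'
  exact (hh.hasDerivAt_comp_curve (γ := fun r => sqrtCoords (t, r))
    ((hsqrt.const_mul (1 - t)).prodMk hsqrt)).congr_deriv (by ring)

lemma pd1_comp_sqrtCoords (hh : DifferentiableAt ℝ h (sqrtCoords x)) :
    pd1 (h ∘ sqrtCoords) x = -√x.2 * pd1 h (sqrtCoords x) :=
  (hasDerivAt_comp_sqrtCoords_fst hh).deriv

lemma pd2_comp_sqrtCoords (hs : 0 < x.2) (hh : DifferentiableAt ℝ h (sqrtCoords x)) :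
    pd2 (h ∘ sqrtCoords) x =
      ((1 - x.1) * pd1 h (sqrtCoords x) + pd2 h (sqrtCoords x)) / (2 * √x.2) :=
  (hasDerivAt_comp_sqrtCoords_snd hs hh).deriv

lemma hasDerivAt_pd2_comp_sqrtCoords_fst (hs : 0 < s) (hh : Differentiable ℝ h)
    (h₁ : DifferentiableAt ℝ (pd1 h) (sqrtCoords (t, s)))
    (h₂ : DifferentiableAt ℝ (pd2 h) (sqrtCoords (t, s))) :
    HasDerivAt (fun r => pd2 (h ∘ sqrtCoords) (r, s))
      ((-pd1 h (sqrtCoords (t, s)) - √s * ((1 - t) * pd1 (pd1 h) (sqrtCoords (t, s)) +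
        pd1 (pd2 h) (sqrtCoords (t, s)))) / (2 * √s)) t := by
  have hpd2 : (fun r => pd2 (h ∘ sqrtCoords) (r, s)) = fun r =>
      ((1 - r) * pd1 h (sqrtCoords (r, s)) + pd2 h (sqrtCoords (r, s))) / (2 * √s) :=
    funext fun r => pd2_comp_sqrtCoords hs (hh _)
  rw [hpd2]
  exact (((((hasDerivAt_id' t).const_sub 1).mul (hasDerivAt_comp_sqrtCoords_fst h₁)).add
    (hasDerivAt_comp_sqrtCoords_fst h₂)).div_const _).congr_deriv (by ring)

end SqrtCoords

section SqrtCoordsBounds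

variable {h : ℝ × ℝ → ℝ} {x : ℝ × ℝ} {M : ℝ}

lemma abs_pd1_comp_sqrtCoords_le (hs : x.2 ≤ 1) (hh : DifferentiableAt ℝ h (sqrtCoords x))
    (h₁ : |pd1 h (sqrtCoords x)| ≤ M) :
    |pd1 (h ∘ sqrtCoords) x| ≤ M := by
  rw [pd1_comp_sqrtCoords hh, abs_mul, abs_neg, abs_of_nonneg (Real.sqrt_nonneg _)]
  exact (mul_le_mul (Real.sqrt_le_one.mpr hs) h₁ (abs_nonneg _) zero_le_one).trans_eq (one_mul M)

lemma abs_pd2_comp_sqrtCoords_le (hx : x ∈ Icc 0 1 ×ˢ Ioc 0 1)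
    (hh : DifferentiableAt ℝ h (sqrtCoords x))
    (h₁ : |pd1 h (sqrtCoords x)| ≤ M) (h₂ : |pd2 h (sqrtCoords x)| ≤ M) :
    |pd2 (h ∘ sqrtCoords) x| ≤ 2 * M / x.2 := by
  obtain ⟨⟨ht₀, ht₁⟩, hs⟩ := hx
  have h1t : |1 - x.1| ≤ 1 := abs_le.mpr ⟨by linarith, by linarith⟩
  rw [pd2_comp_sqrtCoords hs.1 hh]
  refine abs_div_two_sqrt_le hs ?_
  calc |(1 - x.1) * pd1 h (sqrtCoords x) + pd2 h (sqrtCoords x)|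
      ≤ |1 - x.1| * |pd1 h (sqrtCoords x)| + |pd2 h (sqrtCoords x)| :=
        (abs_add_le _ _).trans_eq (by rw [abs_mul])
    _ ≤ 1 * M + M := by gcongr
    _ ≤ 2 * (2 * M) := by linarith [(abs_nonneg _).trans h₂]

lemma abs_pd1_pd2_comp_sqrtCoords_le (hx : x ∈ Icc 0 1 ×ˢ Ioc 0 1) (hh : Differentiable ℝ h)
    (hd₁ : DifferentiableAt ℝ (pd1 h) (sqrtCoords x))
    (hd₂ : DifferentiableAt ℝ (pd2 h) (sqrtCoords x))
    (h₁ : |pd1 h (sqrtCoords x)| ≤ M) (h₁₁ : |pd1 (pd1 h) (sqrtCoords x)| ≤ M)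
    (h₁₂ : |pd1 (pd2 h) (sqrtCoords x)| ≤ M) :
    |pd1 (pd2 (h ∘ sqrtCoords)) x| ≤ 2 * M / x.2 := by
  obtain ⟨t, s⟩ := x
  obtain ⟨⟨ht₀, ht₁⟩, hs⟩ := hx
  have h1t : |1 - t| ≤ 1 := abs_le.mpr ⟨by linarith, by linarith⟩
  have hsqrt : √s ≤ 1 := Real.sqrt_le_one.mpr hs.2
  rw [pd1, (hasDerivAt_pd2_comp_sqrtCoords_fst hs.1 hh hd₁ hd₂).deriv]
  refine abs_div_two_sqrt_le hs ?_
  set p := sqrtCoords (t, s)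
  calc |-pd1 h p - √s * ((1 - t) * pd1 (pd1 h) p + pd1 (pd2 h) p)|
      ≤ |pd1 h p| + √s * (|1 - t| * |pd1 (pd1 h) p| + |pd1 (pd2 h) p|) := by
        refine (abs_sub _ _).trans ?_
        rw [abs_neg, abs_mul, abs_of_nonneg (Real.sqrt_nonneg _), ← abs_mul]
        gcongr
        exact abs_add_le _ _
    _ ≤ M + 1 * (1 * M + M) := by gcongr
    _ ≤ 2 * (2 * M) := by linarith [(abs_nonneg _).trans h₁]

end SqrtCoordsBounds

theorem transformed_bound_mixed_general
    (A : ℝ) (hA : 0 < A)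
    (h : ℝ × ℝ → ℝ) (hsmooth : ContDiff ℝ 2 h)
    (M : ℝ) (hbdd : ∀ x : ℝ × ℝ, x ∈ Icc (0:ℝ) 1 ×ˢ Icc (0:ℝ) 1 →
      |h x| ≤ M ∧ |pd1 h x| ≤ M ∧ |pd2 h x| ≤ M ∧
      |pd1 (pd1 h) x| ≤ M ∧ |pd1 (pd2 h) x| ≤ M ∧
      |pd2 (pd1 h) x| ≤ M ∧ |pd2 (pd2 h) x| ≤ M) :
    ∃ B' : ℝ, ∀ u : ℝ × ℝ, u ∈ Ioo (0:ℝ) 1 ×ˢ Ioo (0:ℝ) 1 →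
      (letI g : ℝ × ℝ → ℝ := fun v =>
        v.1 ^ (-A) * v.2 ^ (-A/2) * h ((1 - v.1) * Real.sqrt v.2, Real.sqrt v.2)
      |pd1 (pd2 g) u| ≤ B' * u.1 ^ (-A - 1) * u.2 ^ (-A/2 - 1)) := by
  have hd : Differentiable ℝ h := hsmooth.differentiable (by norm_num)
  have hd₁ : Differentiable ℝ (pd1 h) :=
    (contDiff_pd1 (n := 1) hsmooth).differentiable one_ne_zero
  have hd₂ : Differentiable ℝ (pd2 h) :=
    (contDiff_pd2 (n := 1) hsmooth).differentiable one_ne_zero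
  refine ⟨(A + 1) * (A / 2 + 1) * (2 * M), fun u hu => ?_⟩
  have hu' : u ∈ Icc 0 1 ×ˢ Ioc 0 1 := prod_mono Ioo_subset_Icc_self Ioo_subset_Ioc_self hu
  obtain ⟨B₀, B₁, B₂, B₁₁, B₁₂, -, -⟩ :=
    hbdd _ (sqrtCoords_mem_Icc (prod_mono Ioo_subset_Icc_self Ioo_subset_Icc_self hu))
  have hM : M ≤ 2 * M := by linarith [(abs_nonneg _).trans B₀]
  have key := abs_pd1_pd2_rpow_mul_le (α := A) (β := A / 2) (φ := h ∘ sqrtCoords) hA.le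
    (by positivity) (Ioo_subset_Ioc_self hu.1) hu.2.1
    (fun t => (hasDerivAt_comp_sqrtCoords_snd hu.2.1 (hd _)).differentiableAt)
    (hasDerivAt_comp_sqrtCoords_fst (hd _)).differentiableAt
    (hasDerivAt_pd2_comp_sqrtCoords_fst hu.2.1 hd (hd₁ _) (hd₂ _)).differentiableAt
    (B₀.trans hM) ((abs_pd1_comp_sqrtCoords_le hu.2.2.le (hd _) B₁).trans hM)
    (abs_pd2_comp_sqrtCoords_le hu' (hd _) B₁ B₂)
    (abs_pd1_pd2_comp_sqrtCoords_le hu' hd (hd₁ _) (hd₂ _) B₁ B₁₁ B₁₂)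
  -- the statement's exponent `-A/2` is `(-A)/2`, the lemma's is `-(A/2)`
  rw [neg_div]
  exact key

/-- For `g(u) = u₁^{−A}u₂^{−A/2} h((1−u₁)√u₂, √u₂)` with `h` bounded with
bounded first and second partials, the mixed second partial `∂²g/∂u₁∂u₂`
satisfies the lower-edge singularity bound `B' u₁^{−A−1} u₂^{−A/2−1}`. -/
theorem transformed_bound_mixed
    (A : ℝ) (hA : 0 < A) (hA1 : A < 1)
    (h : ℝ × ℝ → ℝ) (hsmooth : ContDiff ℝ 2 h)
    (M : ℝ) (hbdd : ∀ x : ℝ × ℝ, x ∈ Icc (0:ℝ) 1 ×ˢ Icc (0:ℝ) 1 →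
      |h x| ≤ M ∧ |pd1 h x| ≤ M ∧ |pd2 h x| ≤ M ∧
      |pd1 (pd1 h) x| ≤ M ∧ |pd1 (pd2 h) x| ≤ M ∧
      |pd2 (pd1 h) x| ≤ M ∧ |pd2 (pd2 h) x| ≤ M) :
    ∃ B' : ℝ, ∀ u : ℝ × ℝ, u ∈ Ioo (0:ℝ) 1 ×ˢ Ioo (0:ℝ) 1 →
      (letI g : ℝ × ℝ → ℝ := fun v =>
        v.1 ^ (-A) * v.2 ^ (-A/2) * h ((1 - v.1) * Real.sqrt v.2, Real.sqrt v.2)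
      |pd1 (pd2 g) u| ≤ B' * u.1 ^ (-A - 1) * u.2 ^ (-A/2 - 1)) :=
  transformed_bound_mixed_general A hA h hsmooth M hbdd
end
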